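/- Let G be a simple graph in which any two cycles with distinct edge sets are edge-disjoint (the cactus condition). Let C be a cycle of G, let s be a vertex of G not lying on C, and let P₁ and P₂ be paths in G starting at s and ending at vertices v₁ and v₂ of C respectively, such that each Pᵢ meets the vertex set of C only in its final vertex vᵢ. Then v₁ = v₂. In other words, in a cactus every path from a fixed vertex s to a cycle C that is internally disjoint from C enters C at the same, uniquely determined vertex. -/

import Mathlib

/-!
If the two paths ended at distinct vertices `v₁ ≠ v₂` of `C`, then walking back along the
first path and out along the second gives a path `Q` from `v₁` to `v₂` that meets `C` only at
its ends and uses no edge of `C`. Closing `Q` with an arc of `C` from `v₂` back to `v₁` yields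
a cycle which shares the arc's edges with `C` but also contains the edges of `Q`, which are not
on `C`: two distinct cycles sharing an edge, which the cactus condition forbids.
-/

namespace SimpleGraph

variable {V : Type*} {G : SimpleGraph V}

def IsCactus [DecidableEq V] (G : SimpleGraph V) : Prop :=
  ∀ (a b : V) (p : G.Walk a a) (q : G.Walk b b),
    p.IsCycle → q.IsCycle → p.edges.toFinset ≠ q.edges.toFinset →
    Disjoint p.edges.toFinset q.edges.toFinset

lemma IsCactus.edges_subset_of_mem_edges [DecidableEq V] (hG : G.IsCactus) {x y : V}
    {c : G.Walk x x} {d : G.Walk y y} (hc : c.IsCycle) (hd : d.IsCycle) {e : Sym2 V}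
    (hec : e ∈ c.edges) (hed : e ∈ d.edges) : d.edges ⊆ c.edges := by
  by_cases heq : d.edges.toFinset = c.edges.toFinset
  · intro f hf
    simpa [heq] using List.mem_toFinset.mpr hf
  · exact absurd (List.mem_toFinset.mpr hec)
      (Finset.disjoint_left.mp (hG y x d c hd hc heq) (List.mem_toFinset.mpr hed))

namespace Walk

variable {u v w x y : V}

lemma IsPath.start_notMem_support_tail {p : G.Walk u v} (hp : p.IsPath) :
    u ∉ p.support.tail :=
  (List.nodup_cons.mp (p.cons_tail_support ▸ hp.support_nodup)).1

lemma IsPath.isCycle_append_of_disjoint_edges {p : G.Walk u v} {q : G.Walk v u}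
    (hp : p.IsPath) (hq : q.IsPath) (hsupport : p.support.tail.Disjoint q.support.tail)
    (hedges : p.edges.Disjoint q.edges) (hnil : ¬ p.Nil) : (p.append q).IsCycle := by
  rw [isCycle_def, isTrail_append, tail_support_append, List.nodup_append']
  refine ⟨⟨hp.isTrail, hq.isTrail, hedges⟩, fun h => hnil ?_,
    hp.support_nodup.tail, hq.support_nodup.tail, hsupport⟩
  exact (nil_append_iff.mp (h ▸ nil_nil)).1

lemma disjoint_edges_of_forall_mem_support_eq {p : G.Walk u v} {c : G.Walk x y}
    (h : ∀ z ∈ p.support, z ∈ c.support → z = w) : p.edges.Disjoint c.edges := by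
  intro e hep hec
  induction e with
  | h a b =>
    have hab : a ≠ b := G.ne_of_adj (p.adj_of_mem_edges hep)
    have ha := h a (p.fst_mem_support_of_mem_edges hep) (c.fst_mem_support_of_mem_edges hec)
    have hb := h b (p.snd_mem_support_of_mem_edges hep) (c.snd_mem_support_of_mem_edges hec)
    exact hab (ha.trans hb.symm)

lemma IsCycle.exists_isPath_edges_subset [DecidableEq V] {c : G.Walk x x} (hc : c.IsCycle)
    (hu : u ∈ c.support) (hv : v ∈ c.support) :
    ∃ r : G.Walk u v, r.IsPath ∧ r.edges ⊆ c.edges ∧ r.support ⊆ c.support := by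
  have hv' : v ∈ (c.rotate u hu).support := (mem_support_rotate_iff ..).mpr hv
  refine ⟨_, (hc.rotate hu).isPath_takeUntil hv', fun e he => ?_, fun z hz => ?_⟩
  · exact (c.rotate_edges u hu).perm.subset ((c.rotate u hu).edges_takeUntil_subset_edges hv' he)
  · exact (mem_support_rotate_iff ..).mp ((c.rotate u hu).support_takeUntil_subset_support hv' hz)

lemma exists_isPath_of_forall_mem_support_eq [DecidableEq V] {s v₁ v₂ : V} {c : G.Walk x y}
    {p₁ : G.Walk s v₁} {p₂ : G.Walk s v₂}
    (h₁ : ∀ z ∈ p₁.support, z ∈ c.support → z = v₁)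
    (h₂ : ∀ z ∈ p₂.support, z ∈ c.support → z = v₂) :
    ∃ q : G.Walk v₁ v₂, q.IsPath ∧ q.edges.Disjoint c.edges ∧
      ∀ z ∈ q.support, z ∈ c.support → z = v₁ ∨ z = v₂ := by
  refine ⟨(p₁.reverse.append p₂).bypass, bypass_isPath _, ?_, fun z hz hzc => ?_⟩
  · refine List.disjoint_of_subset_left (edges_bypass_subset_edges _) ?_
    rw [edges_append, edges_reverse, List.disjoint_append_left, List.disjoint_reverse_left]
    exact ⟨disjoint_edges_of_forall_mem_support_eq h₁,
      disjoint_edges_of_forall_mem_support_eq h₂⟩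
  · have hz' := support_bypass_subset_support _ hz
    rw [mem_support_append_iff, support_reverse, List.mem_reverse] at hz'
    exact hz'.imp (h₁ z · hzc) (h₂ z · hzc)

end Walk

end SimpleGraph

open SimpleGraph Walk

theorem stmt5_general {V : Type*} [DecidableEq V] (G : SimpleGraph V)
    (hcactus : ∀ (a b : V) (p : G.Walk a a) (q : G.Walk b b),
        p.IsCycle → q.IsCycle → p.edges.toFinset ≠ q.edges.toFinset →
        Disjoint p.edges.toFinset q.edges.toFinset)
    (x : V) (C : G.Walk x x) (hC : C.IsCycle)
    (s : V)
    (v₁ v₂ : V) (hv₁ : v₁ ∈ C.support) (hv₂ : v₂ ∈ C.support)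
    (P₁ : G.Walk s v₁) (P₂ : G.Walk s v₂)
    (hmeet₁ : ∀ w ∈ P₁.support, w ∈ C.support → w = v₁)
    (hmeet₂ : ∀ w ∈ P₂.support, w ∈ C.support → w = v₂) :
    v₁ = v₂ := by
  by_contra hne
  obtain ⟨Q, hQ, hQC, hQmeet⟩ := exists_isPath_of_forall_mem_support_eq hmeet₁ hmeet₂
  obtain ⟨R, hR, hRC, hRsupp⟩ := hC.exists_isPath_edges_subset hv₂ hv₁
  have hQe := mk_start_snd_mem_edges (not_nil_of_ne hne : ¬ Q.Nil)
  have hRe := mk_start_snd_mem_edges (not_nil_of_ne (Ne.symm hne) : ¬ R.Nil)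
  have hcycle : (Q.append R).IsCycle := by
    refine hQ.isCycle_append_of_disjoint_edges hR (fun w hwQ hwR => ?_)
      (List.disjoint_of_subset_right hRC hQC) (not_nil_of_ne hne)
    rcases hQmeet w (List.mem_of_mem_tail hwQ) (hRsupp (List.mem_of_mem_tail hwR)) with rfl | rfl
    · exact hQ.start_notMem_support_tail hwQ
    · exact hR.start_notMem_support_tail hwR
  have hsub : (Q.append R).edges ⊆ C.edges :=
    IsCactus.edges_subset_of_mem_edges hcactus hC hcycle (hRC hRe)
      (edges_append Q R ▸ List.mem_append_right _ hRe)
  exact hQC hQe (hsub (edges_append Q R ▸ List.mem_append_left _ hQe))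

/-- In a cactus graph, every path from a fixed vertex `s` outside a cycle `C`
to `C` that is internally disjoint from `C` enters `C` at the same, uniquely
determined vertex. -/
theorem stmt5 {V : Type*} [DecidableEq V] (G : SimpleGraph V)
    (hcactus : ∀ (a b : V) (p : G.Walk a a) (q : G.Walk b b),
        p.IsCycle → q.IsCycle → p.edges.toFinset ≠ q.edges.toFinset →
        Disjoint p.edges.toFinset q.edges.toFinset)
    (x : V) (C : G.Walk x x) (hC : C.IsCycle)
    (s : V) (hs : s ∉ C.support)
    (v₁ v₂ : V) (hv₁ : v₁ ∈ C.support) (hv₂ : v₂ ∈ C.support)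
    (P₁ : G.Walk s v₁) (P₂ : G.Walk s v₂)
    (hP₁ : P₁.IsPath) (hP₂ : P₂.IsPath)
    (hmeet₁ : ∀ w ∈ P₁.support, w ∈ C.support → w = v₁)
    (hmeet₂ : ∀ w ∈ P₂.support, w ∈ C.support → w = v₂) :
    v₁ = v₂ :=
  stmt5_general G hcactus x C hC s v₁ v₂ hv₁ hv₂ P₁ P₂ hmeet₁ hmeet₂
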